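/- arXiv:2604.27971 — 3 statements merged into one kernel-verified Lean document; each statement's English description precedes it below -/
import Mathlib

section
/- Let 0 < μ ≤ 1/2 and define ω₀ = 0, ω_m = μ / sqrt(1 - ω_{m-1}²), and b_m by b₀ = b₁ = 1, b_m = b_{m-1} - μ² b_{m-2}. Then the telescoping product identity ∏_{j=1}^m ω_j = μ^m / sqrt(b_m) holds for all m ≥ 1. -/
noncomputable def omegaSeq (μ : ℝ) : ℕ → ℝ
  | 0 => 0
  | m + 1 => μ / Real.sqrt (1 - (omegaSeq μ m) ^ 2)

noncomputable def bSeq (μ : ℝ) : ℕ → ℝ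
  | 0 => 1
  | 1 => 1
  | m + 2 => bSeq μ (m + 1) - μ ^ 2 * bSeq μ m

lemma bSeq_pos (μ : ℝ) (hμ0 : 0 < μ) (hμ : μ ≤ 1 / 2) (m : ℕ) :
    0 < bSeq μ m ∧ bSeq μ m ≤ 2 * bSeq μ (m + 1) := by
  have hμ2 : μ ^ 2 ≤ 1 / 4 := by nlinarith
  induction m with
  | zero => norm_num [bSeq]
  | succ n ih =>
    obtain ⟨h1, h2⟩ := ih
    have hpos : 0 < bSeq μ (n + 1) := by linarith
    constructor
    · exact hpos
    · have : bSeq μ (n + 2) = bSeq μ (n + 1) - μ ^ 2 * bSeq μ n := rfl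
      nlinarith [sq_nonneg μ]

lemma omega_sq (μ : ℝ) (hμ0 : 0 < μ) (hμ : μ ≤ 1 / 2) (m : ℕ) :
    1 - (omegaSeq μ m) ^ 2 = bSeq μ (m + 1) / bSeq μ m := by
  induction m with
  | zero => simp [omegaSeq, bSeq]
  | succ n ih =>
    have hbn := (bSeq_pos μ hμ0 hμ n).1
    have hbn1 := (bSeq_pos μ hμ0 hμ (n + 1)).1
    have hratio : 0 < bSeq μ (n + 1) / bSeq μ n := div_pos hbn1 hbn
    have hω : omegaSeq μ (n + 1) = μ / Real.sqrt (bSeq μ (n + 1) / bSeq μ n) := by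
      rw [show omegaSeq μ (n + 1) = μ / Real.sqrt (1 - (omegaSeq μ n) ^ 2) from rfl, ih]
    have hsq : (omegaSeq μ (n + 1)) ^ 2 = μ ^ 2 * bSeq μ n / bSeq μ (n + 1) := by
      rw [hω, div_pow, Real.sq_sqrt hratio.le]
      field_simp
    rw [hsq, show bSeq μ (n + 2) = bSeq μ (n + 1) - μ ^ 2 * bSeq μ n from rfl]
    field_simp

theorem stmt_10 (μ : ℝ) (hμ0 : 0 < μ) (hμ : μ ≤ 1 / 2) (m : ℕ) (hm : 1 ≤ m) :
    ∏ j ∈ Finset.Icc 1 m, omegaSeq μ j = μ ^ m / Real.sqrt (bSeq μ m) := by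
  induction m, hm using Nat.le_induction with
  | base => simp [omegaSeq, bSeq]
  | succ n hn ih =>
    have hbn := (bSeq_pos μ hμ0 hμ n).1
    have hbn1 := (bSeq_pos μ hμ0 hμ (n + 1)).1
    have hsn : 0 < Real.sqrt (bSeq μ n) := Real.sqrt_pos.mpr hbn
    have hsn1 : 0 < Real.sqrt (bSeq μ (n + 1)) := Real.sqrt_pos.mpr hbn1
    rw [Finset.prod_Icc_succ_top (by omega : 1 ≤ n + 1), ih]
    have hω : omegaSeq μ (n + 1) = μ * Real.sqrt (bSeq μ n) / Real.sqrt (bSeq μ (n + 1)) := by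
      rw [show omegaSeq μ (n + 1) = μ / Real.sqrt (1 - (omegaSeq μ n) ^ 2) from rfl,
        omega_sq μ hμ0 hμ n, Real.sqrt_div hbn1.le]
      field_simp
    rw [hω]
    field_simp
    ring
end

section
/- Let 0 < μ ≤ 1/2 and define ω₀ = 0, ω_m = μ / sqrt(1 - ω_{m-1}²). Then ω_m = sqrt(μ) · sqrt(U_{m-1}(1/(2μ)) / U_m(1/(2μ))) for all m ≥ 1, where U_k is the k-th Chebyshev polynomial of the second kind. -/
open Polynomial Polynomial.Chebyshev

section Chebyshev

variable {R : Type*} [CommRing R]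

theorem eval_U_natCast_add_two (x : R) (n : ℕ) :
    (U R (n + 2 : ℕ)).eval x = 2 * x * (U R (n + 1 : ℕ)).eval x - (U R n).eval x := by
  simp [U_add_two R n]

theorem mul_eval_U_add_eval_U_add_two {x μ : R} (hxμ : 2 * x * μ = 1) (k : ℕ) :
    μ * ((U R k).eval x + (U R (k + 2 : ℕ)).eval x) = (U R (k + 1 : ℕ)).eval x := by
  rw [eval_U_natCast_add_two]
  linear_combination (U R (k + 1 : ℕ)).eval x * hxμ

variable [LinearOrder R] [IsStrictOrderedRing R]

theorem one_le_eval_U_and_eval_U_le_eval_U_succ {x : R} (hx : 1 ≤ x) (n : ℕ) :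
    1 ≤ (U R n).eval x ∧ (U R n).eval x ≤ (U R (n + 1 : ℕ)).eval x := by
  induction n with
  | zero =>
    simp only [Nat.cast_zero, U_zero, eval_one, zero_add, Nat.cast_one, U_one, eval_mul,
      eval_ofNat, eval_X]
    constructor <;> linarith
  | succ n ih =>
    obtain ⟨one_le, mono⟩ := ih
    refine ⟨one_le.trans mono, ?_⟩
    rw [eval_U_natCast_add_two]
    nlinarith

theorem one_le_eval_U {x : R} (hx : 1 ≤ x) (n : ℕ) : 1 ≤ (U R n).eval x :=
  (one_le_eval_U_and_eval_U_le_eval_U_succ hx n).1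

end Chebyshev

theorem omegaSeq_succ_sq {μ : ℝ} (hμ0 : 0 < μ) (hμ : μ ≤ 1 / 2) (k : ℕ) :
    omegaSeq μ (k + 1) ^ 2 =
      μ * ((U ℝ k).eval (1 / (2 * μ)) / (U ℝ (k + 1 : ℕ)).eval (1 / (2 * μ))) := by
  set x := 1 / (2 * μ) with hx_def
  have hxμ : 2 * x * μ = 1 := by rw [hx_def]; field_simp
  have hU_pos (n : ℕ) : 0 < (U ℝ n).eval x :=
    one_pos.trans_le <| one_le_eval_U (by rw [hx_def, le_div_iff₀ (by positivity)]; linarith) n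
  induction k with
  | zero =>
    norm_num [omegaSeq, hx_def]
    field_simp
  | succ k ih =>
    have hb := hU_pos (k + 1)
    have hc := hU_pos (k + 2)
    have h_denom : 1 - omegaSeq μ (k + 1) ^ 2 =
        μ * ((U ℝ (k + 2 : ℕ)).eval x / (U ℝ (k + 1 : ℕ)).eval x) := by
      rw [ih]
      field_simp
      linear_combination -mul_eval_U_add_eval_U_add_two hxμ k
    have h_denom_pos : 0 < 1 - omegaSeq μ (k + 1) ^ 2 := by rw [h_denom]; positivity
    rw [omegaSeq, div_pow, Real.sq_sqrt h_denom_pos.le, h_denom]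
    field_simp

theorem stmt_11 (μ : ℝ) (hμ0 : 0 < μ) (hμ : μ ≤ 1 / 2) (m : ℕ) (hm : 1 ≤ m) :
    omegaSeq μ m =
      Real.sqrt μ *
        Real.sqrt ((Polynomial.Chebyshev.U ℝ (m - 1 : ℕ)).eval (1 / (2 * μ)) /
          (Polynomial.Chebyshev.U ℝ m).eval (1 / (2 * μ))) := by
  obtain ⟨k, rfl⟩ : ∃ k, m = k + 1 := ⟨m - 1, by omega⟩
  have h_nonneg : 0 ≤ omegaSeq μ (k + 1) := by rw [omegaSeq]; positivity
  rw [← Real.sqrt_mul hμ0.le, Nat.add_sub_cancel, ← omegaSeq_succ_sq hμ0 hμ k,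
    Real.sqrt_sq h_nonneg]
end

section
/- In a complex inner product space, let r and s be vectors with ⟨r, s⟩ = ‖r‖² and ‖r‖ < ‖s‖. Define r* = α₀ r + (1 - α₀) s with α₀ = -‖s‖² / ⟨s, r - s⟩. Then r* is orthogonal to s and ‖r*‖ = ‖r‖ / sqrt(1 - (‖r‖/‖s‖)²). -/
/-!
Since `⟪s, r⟫ = ‖r‖²` is real, `⟪s, r - s⟫ = ‖r‖² - ‖s‖²` and `α₀ = ‖s‖² / (‖s‖² - ‖r‖²)` is real.
For every affine combination `x = α r + (1 - α) s` one has `⟪x, r⟫ = ‖r‖²` and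
`⟪x, s⟫ = ‖s‖² - conj α (‖s‖² - ‖r‖²)`; the latter vanishes exactly for `α = α₀`, and then
`‖x‖² = ⟪x, α r + (1 - α) s⟫ = α₀ ‖r‖² = ‖r‖² / (1 - (‖r‖/‖s‖)²)`.
-/

open RCLike ComplexConjugate

section AffineCombination

variable {𝕜 E : Type*} [RCLike 𝕜] [NormedAddCommGroup E] [InnerProductSpace 𝕜 E]
  {r s : E} {α : 𝕜}

theorem inner_smul_add_one_sub_smul_left (x : E) :
    inner 𝕜 (α • r + (1 - α) • s) x = conj α * inner 𝕜 r x + (1 - conj α) * inner 𝕜 s x := by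
  rw [inner_add_left, inner_smul_left, inner_smul_left, map_sub, map_one]

theorem inner_swap_eq_norm_sq_of_inner_eq_norm_sq (h : inner 𝕜 r s = (‖r‖ ^ 2 : 𝕜)) :
    inner 𝕜 s r = (‖r‖ ^ 2 : 𝕜) := by
  rw [← inner_conj_symm, h, ← ofReal_pow, conj_ofReal]

theorem inner_sub_right_eq_of_inner_eq_norm_sq (h : inner 𝕜 r s = (‖r‖ ^ 2 : 𝕜)) :
    inner 𝕜 s (r - s) = ((‖r‖ ^ 2 - ‖s‖ ^ 2 : ℝ) : 𝕜) := by
  rw [inner_sub_right, inner_swap_eq_norm_sq_of_inner_eq_norm_sq h, inner_self_eq_norm_sq_to_K]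
  norm_cast

theorem neg_norm_sq_div_inner_sub_right_eq_of_inner_eq_norm_sq
    (h : inner 𝕜 r s = (‖r‖ ^ 2 : 𝕜)) :
    -(‖s‖ ^ 2 : 𝕜) / inner 𝕜 s (r - s) = ((‖s‖ ^ 2 / (‖s‖ ^ 2 - ‖r‖ ^ 2) : ℝ) : 𝕜) := by
  rw [inner_sub_right_eq_of_inner_eq_norm_sq h, ← neg_sub, ofReal_neg, neg_div_neg_eq]
  norm_cast

theorem inner_smul_add_one_sub_smul_left_eq_norm_sq (h : inner 𝕜 r s = (‖r‖ ^ 2 : 𝕜)) :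
    inner 𝕜 (α • r + (1 - α) • s) r = (‖r‖ ^ 2 : 𝕜) := by
  rw [inner_smul_add_one_sub_smul_left, inner_swap_eq_norm_sq_of_inner_eq_norm_sq h,
    inner_self_eq_norm_sq_to_K]
  ring

theorem inner_smul_add_one_sub_smul_left_of_inner_eq_norm_sq
    (h : inner 𝕜 r s = (‖r‖ ^ 2 : 𝕜)) :
    inner 𝕜 (α • r + (1 - α) • s) s = (‖s‖ ^ 2 : 𝕜) - conj α * ((‖s‖ ^ 2 : 𝕜) - ‖r‖ ^ 2) := by
  rw [inner_smul_add_one_sub_smul_left, h, inner_self_eq_norm_sq_to_K]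
  ring

theorem inner_smul_add_one_sub_smul_left_eq_zero (h : inner 𝕜 r s = (‖r‖ ^ 2 : 𝕜))
    (hgap : ‖s‖ ^ 2 - ‖r‖ ^ 2 ≠ 0) (hα : α = ((‖s‖ ^ 2 / (‖s‖ ^ 2 - ‖r‖ ^ 2) : ℝ) : 𝕜)) :
    inner 𝕜 (α • r + (1 - α) • s) s = 0 := by
  have hgap' : ((‖s‖ ^ 2 - ‖r‖ ^ 2 : ℝ) : 𝕜) ≠ 0 := ofReal_ne_zero.mpr hgap
  rw [inner_smul_add_one_sub_smul_left_of_inner_eq_norm_sq h, hα, conj_ofReal]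
  push_cast at hgap' ⊢
  field_simp
  ring

theorem norm_sq_smul_add_one_sub_smul_of_inner_eq_zero (h : inner 𝕜 r s = (‖r‖ ^ 2 : 𝕜))
    (h₀ : inner 𝕜 (α • r + (1 - α) • s) s = 0) :
    ((‖α • r + (1 - α) • s‖ : ℝ) : 𝕜) ^ 2 = α * ‖r‖ ^ 2 := by
  rw [← inner_self_eq_norm_sq_to_K]
  conv_lhs => rw [inner_add_right, inner_smul_right, inner_smul_right]
  rw [inner_smul_add_one_sub_smul_left_eq_norm_sq h, h₀, mul_zero, add_zero]

theorem norm_sq_smul_add_one_sub_smul_eq (h : inner 𝕜 r s = (‖r‖ ^ 2 : 𝕜)) (hs : ‖s‖ ≠ 0)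
    (hgap : ‖s‖ ^ 2 - ‖r‖ ^ 2 ≠ 0) (hα : α = ((‖s‖ ^ 2 / (‖s‖ ^ 2 - ‖r‖ ^ 2) : ℝ) : 𝕜)) :
    ‖α • r + (1 - α) • s‖ ^ 2 = ‖r‖ ^ 2 / (1 - (‖r‖ / ‖s‖) ^ 2) := by
  have hK : ((‖α • r + (1 - α) • s‖ ^ 2 : ℝ) : 𝕜) =
      ((‖s‖ ^ 2 / (‖s‖ ^ 2 - ‖r‖ ^ 2) * ‖r‖ ^ 2 : ℝ) : 𝕜) := by
    rw [ofReal_pow, norm_sq_smul_add_one_sub_smul_of_inner_eq_zero h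
      (inner_smul_add_one_sub_smul_left_eq_zero h hgap hα), hα]
    norm_cast
  rw [ofReal_inj.mp hK]
  field_simp

end AffineCombination

theorem stmt_17_general {H : Type*} [NormedAddCommGroup H] [InnerProductSpace ℂ H]
    (r s : H) (hinner : inner ℂ r s = (‖r‖ ^ 2 : ℂ)) (hlt : ‖r‖ < ‖s‖) :
    let α₀ : ℂ := -(‖s‖ ^ 2 : ℂ) / inner ℂ s (r - s)
    let rstar := α₀ • r + (1 - α₀) • s
    inner ℂ rstar s = (0 : ℂ) ∧
      ‖rstar‖ = ‖r‖ / Real.sqrt (1 - (‖r‖ / ‖s‖) ^ 2) := by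
  intro α₀ rstar
  have hs₀ : ‖s‖ ≠ 0 := ((norm_nonneg r).trans_lt hlt).ne'
  have hgap : ‖s‖ ^ 2 - ‖r‖ ^ 2 ≠ 0 := by nlinarith [norm_nonneg r]
  have hα₀ : α₀ = ((‖s‖ ^ 2 / (‖s‖ ^ 2 - ‖r‖ ^ 2) : ℝ) : ℂ) :=
    neg_norm_sq_div_inner_sub_right_eq_of_inner_eq_norm_sq hinner
  have horth : inner ℂ rstar s = 0 := inner_smul_add_one_sub_smul_left_eq_zero hinner hgap hα₀
  refine ⟨horth, ?_⟩
  rw [← Real.sqrt_sq (norm_nonneg rstar), norm_sq_smul_add_one_sub_smul_eq hinner hs₀ hgap hα₀,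
    Real.sqrt_div (sq_nonneg _), Real.sqrt_sq (norm_nonneg r)]

theorem stmt_17 {H : Type*} [NormedAddCommGroup H] [InnerProductSpace ℂ H]
    (r s : H) (hs : s ≠ 0) (hinner : inner ℂ r s = (‖r‖ ^ 2 : ℂ)) (hlt : ‖r‖ < ‖s‖) :
    let α₀ : ℂ := -(‖s‖ ^ 2 : ℂ) / inner ℂ s (r - s)
    let rstar := α₀ • r + (1 - α₀) • s
    inner ℂ rstar s = (0 : ℂ) ∧
      ‖rstar‖ = ‖r‖ / Real.sqrt (1 - (‖r‖ / ‖s‖) ^ 2) :=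
  stmt_17_general r s hinner hlt
end
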